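/- Let μ, σ > 0, γ > 0 with γ ≠ 1, and 0 ≤ λ < μ. Set D = (γ−1)(μ²−λ²)/(γσ⁴) − (1/2 − μ/σ²)², and b = 1/2 − μ/σ² + (γ−1)(μ−λ)/(γσ²). Assume D < 0, set a = sqrt(−D), and assume |b| > a > 0. Then the function w(y) = (a·coth(arcoth(b/a) − a·y) + (μ/σ² − 1/2))/(γ−1) is differentiable and satisfies the Riccati ODE with parameters (μ, σ, γ, λ) at every y such that arcoth(b/a) − a·y has the same (nonzero) sign as arcoth(b/a), and satisfies w(0) = (μ−λ)/(γσ²). -/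

import Mathlib

/-!
With `g = γ - 1`, `c = μ/σ² - 1/2` and `K = (μ² - λ²)/(γσ⁴)` the Riccati equation reads
`w' = g w² - 2 c w + K`, and `a² = -D = c² - g K`. The substitution `w = (a t + c)/g` turns it
into `t' = -a (1 - t²)`, which `t(y) = coth (s - a y)` solves because `coth' = 1 - coth²`.
The constant `s = arcoth (b/a)` is chosen so that `a t(0) = b`, and `(b + c)/g = (μ - λ)/(γσ²)`.
-/

/-- Hyperbolic cotangent, `coth x = cosh x / sinh x` for `x ≠ 0`. -/
noncomputable def coth (x : ℝ) : ℝ := Real.cosh x / Real.sinh x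

/-- Inverse hyperbolic cotangent, defined for `|x| > 1` by
`arcoth x = (1/2) log((x+1)/(x−1))`. -/
noncomputable def arcoth (x : ℝ) : ℝ := (1 / 2) * Real.log ((x + 1) / (x - 1))

open Real Set

lemma hasDerivAt_coth {x : ℝ} (hx : x ≠ 0) : HasDerivAt coth (1 - coth x ^ 2) x := by
  have hsinh : sinh x ≠ 0 := sinh_ne_zero.mpr hx
  refine ((hasDerivAt_cosh x).div (hasDerivAt_sinh x) hsinh).congr_deriv ?_
  have := cosh_sq_sub_sinh_sq x
  simp only [coth]
  field_simp

lemma coth_eq_inv_tanh (x : ℝ) : coth x = (tanh x)⁻¹ := by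
  rw [coth, tanh_eq_sinh_div_cosh, inv_div]

lemma arcoth_eq_artanh_inv {x : ℝ} (hx : 1 < |x|) : arcoth x = artanh x⁻¹ := by
  have hx₀ : x ≠ 0 := by rintro rfl; norm_num at hx
  have hinv : |x⁻¹| < 1 := by rw [abs_inv]; exact inv_lt_one_of_one_lt₀ hx
  obtain ⟨hlo, hhi⟩ := abs_lt.mp hinv
  rw [artanh_eq_half_log ⟨hlo.le, hhi.le⟩, arcoth]
  congr 2
  have hx₁ : x - 1 ≠ 0 := by rintro h; simp [sub_eq_zero.mp h] at hx
  field_simp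

lemma coth_arcoth {x : ℝ} (hx : 1 < |x|) : coth (arcoth x) = x := by
  have hinv : x⁻¹ ∈ Ioo (-1) 1 := by
    rw [mem_Ioo, ← abs_lt, abs_inv]
    exact inv_lt_one_of_one_lt₀ hx
  rw [coth_eq_inv_tanh, arcoth_eq_artanh_inv hx, tanh_artanh hinv, inv_inv]

lemma hasDerivAt_coth_riccati {a c g K s y : ℝ} (hg : g ≠ 0) (ha : a ^ 2 = c ^ 2 - g * K)
    (hy : s - a * y ≠ 0) :
    let w := fun y => (a * coth (s - a * y) + c) / g
    HasDerivAt w (g * w y ^ 2 - 2 * c * w y + K) y := by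
  have hu : HasDerivAt (fun y => s - a * y) (-a) y := by
    simpa using ((hasDerivAt_id y).const_mul a).const_sub s
  refine ((((hasDerivAt_coth hy).comp y hu).const_mul a).add_const c |>.div_const g).congr_deriv ?_
  field_simp
  linear_combination -ha

theorem riccati_coth_solution_general (μ σ γ lam : ℝ)
    (hσ : 0 < σ) (hγ : 0 < γ) (hγ1 : γ ≠ 1)
    (D a b : ℝ)
    (hD : D = (γ - 1) * (μ ^ 2 - lam ^ 2) / (γ * σ ^ 4) - (1 / 2 - μ / σ ^ 2) ^ 2)
    (hb : b = 1 / 2 - μ / σ ^ 2 + (γ - 1) * (μ - lam) / (γ * σ ^ 2))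
    (hDneg : D < 0)
    (ha : a = Real.sqrt (-D))
    (hba : a < |b|) (hapos : 0 < a)
    (w : ℝ → ℝ)
    (hw : w = fun y => (a * coth (arcoth (b / a) - a * y) + (μ / σ ^ 2 - 1 / 2)) / (γ - 1)) :
    (∀ y : ℝ, 0 < (arcoth (b / a) - a * y) * arcoth (b / a) →
      DifferentiableAt ℝ w y ∧
      deriv w y + (1 - γ) * (w y) ^ 2 + (2 * μ / σ ^ 2 - 1) * (w y)
        - (μ ^ 2 - lam ^ 2) / (γ * σ ^ 4) = 0) ∧
    w 0 = (μ - lam) / (γ * σ ^ 2) := by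
  have hg : γ - 1 ≠ 0 := sub_ne_zero.mpr hγ1
  have ha_sq : a ^ 2 = (μ / σ ^ 2 - 1 / 2) ^ 2 - (γ - 1) * ((μ ^ 2 - lam ^ 2) / (γ * σ ^ 4)) := by
    rw [ha, sq_sqrt (neg_nonneg.mpr hDneg.le), hD]
    ring
  refine ⟨fun y hy => ?_, ?_⟩
  · have hderiv := hasDerivAt_coth_riccati hg ha_sq (left_ne_zero_of_mul hy.ne')
    rw [← hw] at hderiv
    refine ⟨hderiv.differentiableAt, ?_⟩
    rw [hderiv.deriv]
    ring
  · have hba' : 1 < |b / a| := by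
      rwa [abs_div, abs_of_pos hapos, one_lt_div hapos]
    simp only [hw, mul_zero, sub_zero]
    rw [coth_arcoth hba', mul_div_cancel₀ b hapos.ne', hb]
    field_simp
    ring

/-- the hyperbolic-cotangent case of the explicit solution of the
Riccati ODE `w' + (1−γ)w² + (2μ/σ² − 1)w − (μ² − λ²)/(γσ⁴) = 0`
with initial value `w(0) = (μ−λ)/(γσ²)`. -/
theorem riccati_coth_solution (μ σ γ lam : ℝ)
    (hμ : 0 < μ) (hσ : 0 < σ) (hγ : 0 < γ) (hγ1 : γ ≠ 1)
    (hlam0 : 0 ≤ lam) (hlamμ : lam < μ)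
    (D a b : ℝ)
    (hD : D = (γ - 1) * (μ ^ 2 - lam ^ 2) / (γ * σ ^ 4) - (1 / 2 - μ / σ ^ 2) ^ 2)
    (hb : b = 1 / 2 - μ / σ ^ 2 + (γ - 1) * (μ - lam) / (γ * σ ^ 2))
    (hDneg : D < 0)
    (ha : a = Real.sqrt (-D))
    (hba : a < |b|) (hapos : 0 < a)
    (w : ℝ → ℝ)
    (hw : w = fun y => (a * coth (arcoth (b / a) - a * y) + (μ / σ ^ 2 - 1 / 2)) / (γ - 1)) :
    (∀ y : ℝ, 0 < (arcoth (b / a) - a * y) * arcoth (b / a) →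
      DifferentiableAt ℝ w y ∧
      deriv w y + (1 - γ) * (w y) ^ 2 + (2 * μ / σ ^ 2 - 1) * (w y)
        - (μ ^ 2 - lam ^ 2) / (γ * σ ^ 4) = 0) ∧
    w 0 = (μ - lam) / (γ * σ ^ 2) :=
  riccati_coth_solution_general μ σ γ lam hσ hγ hγ1 D a b hD hb hDneg ha hba hapos w hw
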